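/- arXiv:0706.2707 — 3 statements merged into one kernel-verified Lean document; each statement's English description precedes it below -/
import Mathlib

section
/- Let q and r be compositions of n, and for each i ∈ {1,…,n} let t_i be the number of components of r equal to i. Then the number of matrices Z ∈ S(q,r) with w(Z) = q is divisible by t_1!·t_2!·…·t_n!, and moreover this number is unchanged if r is replaced by any composition r′ with r′ ≈ r. -/
open scoped Classical

set_option synthInstance.maxHeartbeats 1000000
set_option maxHeartbeats 1000000

noncomputable section

/-- The group algebra `F_p[S_n]`. -/
abbrev GroupAlg (n p : ℕ) : Type := MonoidAlgebra (ZMod p) (Equiv.Perm (Fin n))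

/-- The descent set of a permutation `σ` of `{1,…,n}` (1-based positions):
`k ∈ {1,…,n-1}` is a descent if `σ(k) > σ(k+1)`.  (With 0-based `Fin n` indices this
compares the images at indices `k-1` and `k`.) -/
def descSet {n : ℕ} (σ : Equiv.Perm (Fin n)) : Set ℕ :=
  {k | ∃ h : k < n, 0 < k ∧ σ ⟨k, h⟩ < σ ⟨k - 1, by omega⟩}

/-- The set of proper partial sums `{a_1, a_1+a_2, …, a_1+⋯+a_{s-1}}` of a composition. -/
def properPartialSums {n : ℕ} (q : Composition n) : Set ℕ :=
  {m | ∃ i : ℕ, 0 < i ∧ i < q.length ∧ m = q.sizeUpTo i}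

/-- `B̄_q`: the sum of all permutations whose descent set is contained in the set of
proper partial sums of `q`. -/
def Bel (n p : ℕ) (q : Composition n) : GroupAlg n p :=
  ∑ σ ∈ Finset.univ.filter
      (fun σ : Equiv.Perm (Fin n) => descSet σ ⊆ properPartialSums q),
    MonoidAlgebra.of (ZMod p) (Equiv.Perm (Fin n)) σ

/-- The p-modular descent algebra `Σ(n,p)`, as a subalgebra of the group algebra. -/
def descentAlgebra (n p : ℕ) : Subalgebra (ZMod p) (GroupAlg n p) :=
  Algebra.adjoin (ZMod p) (Set.range (Bel n p))

/-- `B̄_q` as an element of `Σ(n,p)`. -/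
def BelS (n p : ℕ) (q : Composition n) : descentAlgebra n p :=
  ⟨Bel n p q, Algebra.subset_adjoin ⟨q, rfl⟩⟩

/-- The Jacobson radical `R(n,p)` of `Σ(n,p)`. -/
def descentRadical (n p : ℕ) : Ideal (descentAlgebra n p) :=
  (⊥ : Ideal (descentAlgebra n p)).jacobson

/-- `R(n,p)` viewed as an `F_p`-subspace of the group algebra. -/
def descentRadicalSubmodule (n p : ℕ) : Submodule (ZMod p) (GroupAlg n p) :=
  Submodule.map (descentAlgebra n p).val.toLinearMap
    ((descentRadical n p).restrictScalars (ZMod p))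

/-- `Y_m`: the span of the `B̄_q` with `q` having at least `m` components. -/
def Ysub (n p m : ℕ) : Submodule (ZMod p) (GroupAlg n p) :=
  Submodule.span (ZMod p) {x | ∃ q : Composition n, m ≤ q.length ∧ x = Bel n p q}

/-- `T`: the span of all differences `B̄_q - B̄_r` with `q ≈ r`. -/
def Tsub (n p : ℕ) : Submodule (ZMod p) (GroupAlg n p) :=
  Submodule.span (ZMod p)
    {x | ∃ q r : Composition n, q.blocks.Perm r.blocks ∧ x = Bel n p q - Bel n p r}

/-- `g(n,p)`: the number of partitions of `n` with no part divisible by `p`. -/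
def gPart (n p : ℕ) : ℕ := Set.ncard {π : n.Partition | ∀ i ∈ π.parts, ¬ p ∣ i}

/-- `g(n,p)`: the number of conjugacy classes of `p`-regular elements of `S_n`. -/
def gReg (n p : ℕ) : ℕ :=
  Set.ncard {c : ConjClasses (Equiv.Perm (Fin n)) | ∀ σ ∈ c.carrier, (orderOf σ).Coprime p}

/-- The Young character `χ_q`: `χ_q(σ)` is the number of ordered set partitions
`(P_1,…,P_s)` of `{1,…,n}` with `|P_i| = a_i`, each of whose blocks is `σ`-invariant. -/
def youngChar {n : ℕ} (q : Composition n) (σ : Equiv.Perm (Fin n)) : ℕ :=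
  (Finset.univ.filter (fun P : Fin q.length → Finset (Fin n) =>
    (∀ i, (P i).card = q.blocksFun i) ∧
    (∀ i j, i ≠ j → Disjoint (P i) (P j)) ∧
    (∀ x, ∃ i, x ∈ P i) ∧
    (∀ i, ∀ x ∈ P i, σ x ∈ P i))).card

/-- `χ̃_q`: the Young character with values reduced mod `p`. -/
def youngCharMod (n p : ℕ) (q : Composition n) : Equiv.Perm (Fin n) → ZMod p :=
  fun σ => (youngChar q σ : ZMod p)

/-- `G(n,p)`: the span of the mod-`p` Young characters. -/
def Gnp (n p : ℕ) : Submodule (ZMod p) (Equiv.Perm (Fin n) → ZMod p) :=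
  Submodule.span (ZMod p) (Set.range (youngCharMod n p))

/-- `S(q,r)`: matrices with row sums `q` and column sums `r`. -/
def SMat {n : ℕ} (q r : Composition n) : Set (Matrix (Fin q.length) (Fin r.length) ℕ) :=
  {Z | (∀ i, ∑ j, Z i j = q.blocksFun i) ∧ (∀ j, ∑ i, Z i j = r.blocksFun j)}

/-- `w(Z)`: the list of nonzero entries of `Z` read row by row. -/
def wList {s t : ℕ} (Z : Matrix (Fin s) (Fin t) ℕ) : List ℕ :=
  ((List.finRange s).flatMap fun i => ((List.finRange t).map fun j => Z i j)).filter
    (fun x => x ≠ 0)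

/-- One merging step: replace two adjacent components by their sum. -/
def mergeStep (l l' : List ℕ) : Prop :=
  ∃ (u v : List ℕ) (a b : ℕ), l = u ++ a :: b :: v ∧ l' = u ++ (a + b) :: v

/-- `coarsens l l'` (`l ⪯ l'` on compositions): `l'` is obtained from `l` by repeatedly
replacing adjacent components by their sum. -/
def coarsens (l l' : List ℕ) : Prop := Relation.ReflTransGen mergeStep l l'

/-! A matrix `Z ∈ S(q,r)` with `w(Z) = q` has exactly one nonzero entry in each row: the
nonzero entries of row `i` are positive and sum to `a_i`, while their concatenation over all rows
is `q = [a_1, …, a_s]`. So such matrices are the maps `c` from rows to columns whose fibres carry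
`q`-weight `b_j`. The permutations of the columns preserving `r` act freely on these maps, since
every column is hit (`b_j > 0`), and they form a group of order `t_1! ⋯ t_n!`. A bijection of
columns carrying `r` to `r'` identifies the maps for `r` with those for `r'`. -/

open Finset

lemma MulAction.card_dvd_card_of_stabilizer_eq_bot {G X : Type*} [Group G] [MulAction G X]
    (h : ∀ x : X, MulAction.stabilizer G x = ⊥) : Nat.card G ∣ Nat.card X := by
  rw [Nat.card_congr (MulAction.selfEquivOrbitsQuotientProd h), Nat.card_prod]
  exact dvd_mul_left _ _

def fiberPerms {κ β : Type*} (b : κ → β) : Subgroup (Equiv.Perm κ) where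
  carrier := {g | b ∘ g = b}
  one_mem' := rfl
  mul_mem' {g h} hg hh := by
    show b ∘ (g ∘ h) = b
    rw [← Function.comp_assoc, hg, hh]
  inv_mem' {g} hg := by
    show b ∘ ⇑g⁻¹ = b
    nth_rw 1 [← hg]
    ext; simp

lemma card_fiberPerms {κ β : Type*} [Fintype κ] [DecidableEq κ] [DecidableEq β]
    (b : κ → β) :
    Nat.card (fiberPerms b) = ∏ v ∈ univ.image b, (Fintype.card {j // b j = v}).factorial := by
  rw [← DomMulAct.stabilizer_card', ← Nat.card_eq_fintype_card]
  rfl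

section PushforwardMaps

variable {ι κ κ' M : Type*} [Fintype ι] [DecidableEq κ] [DecidableEq κ'] [AddCommMonoid M]

def pushforwardMaps (a : ι → M) (b : κ → M) : Set (ι → κ) :=
  {c | ∀ j, ∑ i with c i = j, a i = b j}

lemma comp_mem_pushforwardMaps {a : ι → M} {b : κ → M} {b' : κ' → M} (τ : κ ≃ κ')
    (hτ : b' ∘ τ = b) {c : ι → κ} (hc : c ∈ pushforwardMaps a b) :
    τ ∘ c ∈ pushforwardMaps a b' := by
  intro j
  calc ∑ i with τ (c i) = j, a i = ∑ i with c i = τ.symm j, a i := by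
        simp only [Equiv.eq_symm_apply]
    _ = b' j := by rw [hc, ← hτ, Function.comp_apply, τ.apply_symm_apply]

lemma image_comp_pushforwardMaps {a : ι → M} {b : κ → M} {b' : κ' → M} (τ : κ ≃ κ')
    (hτ : b' ∘ τ = b) : (τ ∘ ·) '' pushforwardMaps a b = pushforwardMaps a b' := by
  refine subset_antisymm (Set.image_subset_iff.2 fun c => comp_mem_pushforwardMaps τ hτ)
    fun c hc => ⟨τ.symm ∘ c, comp_mem_pushforwardMaps τ.symm ?_ hc, ?_⟩
  · rw [← hτ, Function.comp_assoc, τ.self_comp_symm, Function.comp_id]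
  · ext; simp

lemma ncard_pushforwardMaps_congr {a : ι → M} {b : κ → M} {b' : κ' → M} (τ : κ ≃ κ')
    (hτ : b' ∘ τ = b) : (pushforwardMaps a b).ncard = (pushforwardMaps a b').ncard := by
  rw [← image_comp_pushforwardMaps τ hτ, Set.ncard_image_of_injective _ τ.injective.comp_left]

lemma surjective_of_mem_pushforwardMaps {a : ι → M} {b : κ → M} (hb : ∀ j, b j ≠ 0)
    {c : ι → κ} (hc : c ∈ pushforwardMaps a b) : Function.Surjective c := by
  intro j
  by_contra! hj
  exact hb j (by rw [← hc j, Finset.filter_false_of_mem fun i _ => hj i, Finset.sum_empty])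

def pushforwardMapsSubMulAction (a : ι → M) (b : κ → M) :
    SubMulAction (fiberPerms b) (ι → κ) where
  carrier := pushforwardMaps a b
  smul_mem' g _ hc := comp_mem_pushforwardMaps (g : Equiv.Perm κ) g.2 hc

lemma card_fiberPerms_dvd_ncard_pushforwardMaps (a : ι → M) {b : κ → M}
    (hb : ∀ j, b j ≠ 0) :
    Nat.card (fiberPerms b) ∣ (pushforwardMaps a b).ncard := by
  refine MulAction.card_dvd_card_of_stabilizer_eq_bot (X := pushforwardMapsSubMulAction a b)
    fun c => (Subgroup.eq_bot_iff_forall _).2 fun g hg => Subtype.ext <| Equiv.ext fun j => ?_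
  obtain ⟨i, rfl⟩ := surjective_of_mem_pushforwardMaps hb c.2 j
  exact congrFun (congrArg Subtype.val hg) i

end PushforwardMaps

section RowSingleMatrix

variable {ι κ M : Type*} [DecidableEq κ] [AddCommMonoid M]

def rowSingleMatrix (c : ι → κ) (a : ι → M) : Matrix ι κ M :=
  fun i => Pi.single (c i) (a i)

lemma sum_rowSingleMatrix_apply_right [Fintype κ] (c : ι → κ) (a : ι → M) (i : ι) :
    ∑ j, rowSingleMatrix c a i j = a i := by
  simp [rowSingleMatrix]

lemma sum_rowSingleMatrix_apply_left [Fintype ι] (c : ι → κ) (a : ι → M) (j : κ) :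
    ∑ i, rowSingleMatrix c a i j = ∑ i with c i = j, a i := by
  simp only [rowSingleMatrix, Pi.single_apply, Finset.sum_filter, eq_comm]

lemma rowSingleMatrix_left_injective {a : ι → M} (ha : ∀ i, a i ≠ 0) :
    Function.Injective fun c : ι → κ => rowSingleMatrix c a := by
  intro c c' h
  funext i
  by_contra hne
  apply ha i
  simpa [rowSingleMatrix, Pi.single_eq_of_ne hne] using congrFun (congrFun h i) (c i)

end RowSingleMatrix

lemma List.forall_eq_singleton_sum_of_flatten_eq_map_sum {L : List (List ℕ)}
    (hpos : ∀ l ∈ L, ∀ x ∈ l, x ≠ 0) (h : L.flatten = L.map List.sum) :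
    ∀ l ∈ L, l = [l.sum] := by
  induction L with
  | nil => simp
  | cons l L ih =>
    have ih' := ih (fun l' hl' => hpos l' (List.mem_cons_of_mem _ hl'))
    rcases l with _ | ⟨y, ys⟩
    · have h0 : (0 : ℕ) ∈ L.flatten := by
        simp only [List.flatten_cons, List.nil_append, List.map_cons, List.sum_nil] at h
        exact h ▸ List.mem_cons_self
      obtain ⟨l', hl', h0⟩ := List.mem_flatten.1 h0
      exact absurd rfl (hpos l' (List.mem_cons_of_mem _ hl') 0 h0)
    · simp only [List.flatten_cons, List.cons_append, List.map_cons, List.sum_cons,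
        List.cons.injEq] at h
      obtain ⟨hy, htail⟩ := h
      have hys : ys = [] := List.eq_nil_iff_forall_not_mem.2 fun x hx =>
        hpos _ List.mem_cons_self x (List.mem_cons_of_mem _ hx)
          (List.sum_eq_zero_iff.1 (by omega) x hx)
      subst hys
      rintro l (_ | ⟨_, hl⟩)
      · simp
      · exact ih' (by simpa using htail) l hl

lemma List.sum_filter_ne_zero {M : Type*} [AddMonoid M] [DecidableEq M] (l : List M) :
    (l.filter (fun x => x ≠ 0)).sum = l.sum := by
  induction l with
  | nil => rfl
  | cons x l ih => by_cases hx : x = 0 <;> simp_all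

lemma List.count_ofFn {α : Type*} [DecidableEq α] {m : ℕ} (f : Fin m → α) (v : α) :
    (List.ofFn f).count v = Fintype.card {j // f j = v} := by
  rw [← Multiset.coe_count, ← Fin.univ_val_map, Multiset.count_map, Fintype.card_subtype]
  simp [Finset.card, eq_comm]

lemma List.Perm.exists_equiv_comp_eq {α : Type*} [DecidableEq α] {m m' : ℕ} {f : Fin m → α}
    {f' : Fin m' → α} (h : (List.ofFn f).Perm (List.ofFn f')) :
    ∃ τ : Fin m ≃ Fin m', f' ∘ τ = f :=
  ⟨Equiv.ofFiberEquiv fun v => Fintype.equivOfCardEq <| by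
      rw [← List.count_ofFn, ← List.count_ofFn, h.count_eq],
    funext <| Equiv.ofFiberEquiv_map _⟩

def nonzeroEntries {t : ℕ} (f : Fin t → ℕ) : List ℕ :=
  ((List.finRange t).map f).filter (fun x => x ≠ 0)

lemma wList_eq_flatten {s t : ℕ} (Z : Matrix (Fin s) (Fin t) ℕ) :
    wList Z = ((List.finRange s).map fun i => nonzeroEntries (Z i)).flatten := by
  rw [wList, List.filter_flatMap, List.flatMap_def]
  rfl

lemma sum_nonzeroEntries {t : ℕ} (f : Fin t → ℕ) : (nonzeroEntries f).sum = ∑ j, f j := by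
  rw [nonzeroEntries, List.sum_filter_ne_zero, Fin.sum_univ_def]

lemma ne_zero_of_mem_nonzeroEntries {t : ℕ} {f : Fin t → ℕ} {x : ℕ}
    (hx : x ∈ nonzeroEntries f) : x ≠ 0 := by
  simpa using (List.mem_filter.1 hx).2

lemma nonzeroEntries_eq_singleton_iff {t : ℕ} {f : Fin t → ℕ} {x : ℕ} (hx : x ≠ 0) :
    nonzeroEntries f = [x] ↔ ∃ j, f = Pi.single j x := by
  rw [nonzeroEntries, List.filter_map, List.map_eq_singleton_iff]
  constructor
  · rintro ⟨j, hj, rfl⟩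
    refine ⟨j, funext fun k => ?_⟩
    by_cases hk : k = j
    · simp [hk]
    rw [Pi.single_eq_of_ne hk]
    by_contra hfk
    have hmem : k ∈ (List.finRange t).filter ((fun x => decide (x ≠ 0)) ∘ f) :=
      List.mem_filter.2 ⟨List.mem_finRange k, by simpa using hfk⟩
    rw [hj, List.mem_singleton] at hmem
    exact hk hmem
  · rintro ⟨j, rfl⟩
    refine ⟨j, ?_, by simp⟩
    rw [List.filter_congr (q := fun k => decide (k = j)) fun k _ => by
      by_cases hk : k = j <;> simp [hk, hx], List.filter_eq, List.count_finRange]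
    rfl

lemma nonzeroEntries_eq_singleton_of_wList_eq_ofFn {s t : ℕ} {Z : Matrix (Fin s) (Fin t) ℕ}
    {a : Fin s → ℕ} (hrow : ∀ i, ∑ j, Z i j = a i) (hw : wList Z = List.ofFn a)
    (i : Fin s) : nonzeroEntries (Z i) = [a i] := by
  set L := (List.finRange s).map fun i => nonzeroEntries (Z i)
  have hsums : L.map List.sum = List.ofFn a := by
    rw [List.map_map, List.ofFn_eq_map]
    exact List.map_congr_left fun i _ => (sum_nonzeroEntries _).trans (hrow i)
  have hsingle := List.forall_eq_singleton_sum_of_flatten_eq_map_sum (L := L)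
    (by simpa [L] using fun i x hx => ne_zero_of_mem_nonzeroEntries hx)
    (by rw [hsums, ← wList_eq_flatten, hw])
  rw [hsingle _ (List.mem_map_of_mem (List.mem_finRange i)), sum_nonzeroEntries, hrow]

lemma wList_rowSingleMatrix {s t : ℕ} (c : Fin s → Fin t) {a : Fin s → ℕ}
    (ha : ∀ i, a i ≠ 0) : wList (rowSingleMatrix c a) = List.ofFn a := by
  rw [wList_eq_flatten, List.map_congr_left fun i _ =>
      (nonzeroEntries_eq_singleton_iff (f := rowSingleMatrix c a i) (ha i)).2 ⟨c i, rfl⟩,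
    ← List.flatMap_def, ← List.map_eq_flatMap, ← List.ofFn_eq_map]

lemma Composition.blocksFun_ne_zero {n : ℕ} (q : Composition n) (i : Fin q.length) :
    q.blocksFun i ≠ 0 :=
  Nat.one_le_iff_ne_zero.1 (q.one_le_blocksFun i)

lemma Composition.card_fiberPerms_blocksFun {n : ℕ} (r : Composition n) :
    Nat.card (fiberPerms r.blocksFun) = ∏ i ∈ Icc 1 n, (r.blocks.count i).factorial := by
  rw [card_fiberPerms, ← r.ofFn_blocksFun]
  simp_rw [List.count_ofFn]
  refine prod_subset (fun v hv => ?_) fun v _ hv => ?_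
  · obtain ⟨j, -, rfl⟩ := mem_image.1 hv
    exact mem_Icc.2 ⟨r.one_le_blocksFun j, r.blocksFun_le j⟩
  · rw [Fintype.card_eq_zero_iff.2 ⟨fun j => hv (mem_image.2 ⟨j.1, mem_univ _, j.2⟩)⟩,
      Nat.factorial_zero]

lemma setOf_mem_SMat_wList_eq_image {n : ℕ} (q r : Composition n) :
    {Z ∈ SMat q r | wList Z = q.blocks} =
      (rowSingleMatrix · q.blocksFun) '' pushforwardMaps q.blocksFun r.blocksFun := by
  ext Z
  constructor
  · rintro ⟨⟨hrow, hcol⟩, hw⟩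
    rw [← q.ofFn_blocksFun] at hw
    choose c hc using fun i => (nonzeroEntries_eq_singleton_iff (q.blocksFun_ne_zero i)).1
      (nonzeroEntries_eq_singleton_of_wList_eq_ofFn hrow hw i)
    obtain rfl : Z = rowSingleMatrix c q.blocksFun := funext hc
    exact ⟨c, fun j => (sum_rowSingleMatrix_apply_left _ _ j).symm.trans (hcol j), rfl⟩
  · rintro ⟨c, hc, rfl⟩
    refine ⟨⟨sum_rowSingleMatrix_apply_right c _,
      fun j => (sum_rowSingleMatrix_apply_left _ _ j).trans (hc j)⟩, ?_⟩
    rw [wList_rowSingleMatrix c q.blocksFun_ne_zero, q.ofFn_blocksFun]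

lemma ncard_setOf_mem_SMat_wList_eq {n : ℕ} (q r : Composition n) :
    {Z ∈ SMat q r | wList Z = q.blocks}.ncard =
      (pushforwardMaps q.blocksFun r.blocksFun).ncard := by
  rw [setOf_mem_SMat_wList_eq_image,
    Set.ncard_image_of_injective _ (rowSingleMatrix_left_injective q.blocksFun_ne_zero)]

/-- The number of matrices `Z ∈ S(q,r)` with `w(Z) = q` is divisible by
`t_1!·t_2!·…·t_n!` where `t_i` is the number of components of `r` equal to `i`, and this
number is unchanged if `r` is replaced by any composition `r' ≈ r`. -/
theorem stmt1 (n : ℕ) (q r : Composition n) :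
    (∏ i ∈ Finset.Icc 1 n, Nat.factorial (r.blocks.count i)) ∣
      Set.ncard {Z ∈ SMat q r | wList Z = q.blocks} ∧
    (∀ r' : Composition n, r.blocks.Perm r'.blocks →
      Set.ncard {Z ∈ SMat q r | wList Z = q.blocks} =
        Set.ncard {Z ∈ SMat q r' | wList Z = q.blocks}) := by
  refine ⟨?_, fun r' hr' => ?_⟩
  · rw [ncard_setOf_mem_SMat_wList_eq, ← r.card_fiberPerms_blocksFun]
    exact card_fiberPerms_dvd_ncard_pushforwardMaps _ r.blocksFun_ne_zero
  · rw [← r.ofFn_blocksFun, ← r'.ofFn_blocksFun] at hr'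
    obtain ⟨τ, hτ⟩ := hr'.exists_equiv_comp_eq
    rw [ncard_setOf_mem_SMat_wList_eq, ncard_setOf_mem_SMat_wList_eq,
      ncard_pushforwardMaps_congr τ hτ]

end
end

section
/- Let q and r be compositions of n with q ≈ r, and for each i ∈ {1,…,n} let t_i be the number of components of r equal to i. Then the number of matrices Z ∈ S(q,r) with w(Z) = q is exactly t_1!·t_2!·…·t_n!. -/
open scoped Classical

set_option synthInstance.maxHeartbeats 1000000
set_option maxHeartbeats 1000000

noncomputable section

private lemma card_fiber_eq_count {s : ℕ} (a : Fin s → ℕ) (v : ℕ) :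
    Fintype.card {i : Fin s // a i = v} = (List.ofFn a).count v := by
  rw [Fintype.card_subtype, List.ofFn_eq_map, List.count_eq_countP, List.countP_map,
    Fin.univ_def]
  rw [show (Finset.filter (fun x => a x = v)
        ⟨(List.finRange s : List (Fin s)), List.nodup_finRange s⟩).card
      = ((List.finRange s).filter (fun x => a x = v)).length from rfl]
  rw [List.countP_eq_length_filter]
  apply congrArg
  apply List.filter_congr
  intro x _
  by_cases h : a x = v <;> simp [h]

private lemma filter_flatMap' {α β : Type*} (l : List α) (f : α → List β) (p : β → Bool) :
    (l.flatMap f).filter p = l.flatMap fun a => (f a).filter p := by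
  induction l with
  | nil => rfl
  | cons a l ih => simp only [List.flatMap_cons, List.filter_append, ih]

private lemma flatMap_single {α β : Type*} (l : List α) (f : α → β) :
    (l.flatMap fun a => [f a]) = l.map f := by
  induction l with
  | nil => rfl
  | cons a l ih => simp [List.flatMap_cons, ih]

private lemma row_filter {t : ℕ} (j₀ : Fin t) (c : ℕ) (hc : c ≠ 0) :
    (((List.finRange t).map (fun j => if j₀ = j then c else 0)).filter
      (fun x => x ≠ 0)) = [c] := by
  rw [List.filter_map]
  have h1 : ∀ j ∈ List.finRange t,
      ((fun x => decide (x ≠ 0)) ∘ (fun j => if j₀ = j then c else 0)) j = (j == j₀) := by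
    intro j _
    by_cases h : j₀ = j
    · subst h; simp [hc]
    · have h' : ¬ j = j₀ := fun hh => h hh.symm
      simp [h, h']
  rw [List.filter_congr h1, List.filter_beq,
    List.count_eq_one_of_mem (List.nodup_finRange t) (List.mem_finRange j₀)]
  simp

private lemma card_filter_eq_length {t : ℕ} (g : Fin t → ℕ) :
    (Finset.univ.filter (fun j => g j ≠ 0)).card
      = (((List.finRange t).map g).filter (fun x => x ≠ 0)).length := by
  rw [List.filter_map, List.length_map, Fin.univ_def]
  rw [show (Finset.filter (fun j => g j ≠ 0)
        ⟨(List.finRange t : List (Fin t)), List.nodup_finRange t⟩).card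
      = ((List.finRange t).filter (fun j => decide (g j ≠ 0))).length from rfl]
  apply congrArg
  apply List.filter_congr
  intro x _
  by_cases hx : g x = 0 <;> simp [hx]

private def Zmat {n : ℕ} (q r : Composition n) (σ : Fin q.length ≃ Fin r.length) :
    Matrix (Fin q.length) (Fin r.length) ℕ := fun i j => if σ i = j then q.blocksFun i else 0

private lemma card_bij {n : ℕ} (q r : Composition n) (h : q.blocks.Perm r.blocks) :
    Nat.card {σ : Fin q.length ≃ Fin r.length // ∀ i, r.blocksFun (σ i) = q.blocksFun i} =
      ∏ i ∈ Finset.Icc 1 n, Nat.factorial (r.blocks.count i) := by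
  classical
  have hfib : ∀ v : ℕ, Nonempty ({i : Fin q.length // q.blocksFun i = v} ≃
      {j : Fin r.length // r.blocksFun j = v}) := by
    intro v
    apply Fintype.card_eq.mp
    rw [card_fiber_eq_count, card_fiber_eq_count, Composition.ofFn_blocksFun,
      Composition.ofFn_blocksFun, h.count_eq]
  obtain ⟨σ₀, hσ₀⟩ : ∃ σ₀ : Fin q.length ≃ Fin r.length,
      ∀ i, r.blocksFun (σ₀ i) = q.blocksFun i :=
    ⟨Equiv.ofFiberEquiv (fun v => (hfib v).some), fun i => Equiv.ofFiberEquiv_map _ i⟩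
  let e : {τ : Equiv.Perm (Fin q.length) // q.blocksFun ∘ τ = q.blocksFun} ≃
      {σ : Fin q.length ≃ Fin r.length // ∀ i, r.blocksFun (σ i) = q.blocksFun i} :=
    { toFun := fun τ => ⟨τ.1.trans σ₀, fun i => by
        simp only [Equiv.trans_apply, hσ₀]
        exact congrFun τ.2 i⟩
      invFun := fun σ => ⟨σ.1.trans σ₀.symm, by
        funext i
        have h1 : r.blocksFun (σ₀ (σ₀.symm (σ.1 i))) = q.blocksFun (σ₀.symm (σ.1 i)) := hσ₀ _
        rw [Equiv.apply_symm_apply] at h1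
        simp only [Function.comp_apply, Equiv.trans_apply]
        rw [← h1, σ.2 i]⟩
      left_inv := fun τ => by apply Subtype.ext; ext i; simp
      right_inv := fun σ => by apply Subtype.ext; ext i; simp }
  rw [← Nat.card_congr e, Nat.card_eq_fintype_card, DomMulAct.stabilizer_card']
  have hcnt : ∀ v, Fintype.card {i // q.blocksFun i = v} = r.blocks.count v := by
    intro v; rw [card_fiber_eq_count, Composition.ofFn_blocksFun, h.count_eq]
  rw [Finset.prod_congr rfl (fun v _ => by rw [hcnt v])]
  apply Finset.prod_subset
  · intro v hv
    obtain ⟨i, _, hi⟩ := Finset.mem_image.mp hv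
    subst hi
    exact Finset.mem_Icc.mpr ⟨q.one_le_blocksFun i,
      le_trans (List.single_le_sum (fun _ _ => Nat.zero_le _) _ (q.blocksFun_mem_blocks i))
        (le_of_eq q.blocks_sum)⟩
  · intro v _ hnv
    have hz : r.blocks.count v = 0 := by
      rw [← h.count_eq, ← Composition.ofFn_blocksFun, ← card_fiber_eq_count]
      rw [Fintype.card_eq_zero_iff]
      exact ⟨fun x => hnv (Finset.mem_image.mpr ⟨x.1, Finset.mem_univ _, x.2⟩)⟩
    rw [hz]
    rfl

/-- If `q ≈ r` then the number of matrices `Z ∈ S(q,r)` with `w(Z) = q`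
is exactly `t_1!·t_2!·…·t_n!` where `t_i` is the number of components of `r` equal to `i`. -/
theorem stmt2 (n : ℕ) (q r : Composition n) (h : q.blocks.Perm r.blocks) :
    Set.ncard {Z ∈ SMat q r | wList Z = q.blocks} =
      ∏ i ∈ Finset.Icc 1 n, Nat.factorial (r.blocks.count i) := by
  classical
  have hst : q.length = r.length := by
    rw [← Composition.blocks_length, ← Composition.blocks_length]; exact h.length_eq
  have himg : {Z ∈ SMat q r | wList Z = q.blocks} =
      (fun σ : {σ : Fin q.length ≃ Fin r.length //
          ∀ i, r.blocksFun (σ i) = q.blocksFun i} => Zmat q r σ.1) '' Set.univ := by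
    apply Set.eq_of_subset_of_subset
    · rintro Z ⟨⟨hrow, hcol⟩, hw⟩
      have hw' : ((List.finRange q.length).flatMap
          (fun i => (((List.finRange r.length).map fun j => Z i j)).filter (fun x => x ≠ 0)))
          = q.blocks := by
        rw [← filter_flatMap']; exact hw
      set len : Fin q.length → ℕ := fun i =>
        ((((List.finRange r.length).map fun j => Z i j)).filter (fun x => x ≠ 0)).length
        with hlen
      have hsum : ∑ i, len i = q.length := by
        have h2 := congrArg List.length hw'
        rw [List.length_flatMap, Composition.blocks_length] at h2
        rw [Fin.sum_univ_def]
        exact h2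
      have hone : ∀ i, 1 ≤ len i := by
        intro i
        rw [Nat.one_le_iff_ne_zero]
        intro h0
        rw [hlen, List.length_eq_zero_iff] at h0
        have hall : ∀ j, Z i j = 0 := by
          intro j
          by_contra hj
          have hmem : Z i j ∈ ((List.finRange r.length).map fun j => Z i j) :=
            List.mem_map.mpr ⟨j, List.mem_finRange j, rfl⟩
          have h3 := List.filter_eq_nil_iff.mp h0 _ hmem
          simp [hj] at h3
        have h4 := hrow i
        rw [Finset.sum_eq_zero (fun j _ => hall j)] at h4
        exact Nat.one_le_iff_ne_zero.mp (q.one_le_blocksFun i) h4.symm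
      have hlen1 : ∀ i, len i = 1 := by
        have hsum' : (∑ _i : Fin q.length, 1) = ∑ i, len i := by
          rw [hsum]; simp
        intro i
        exact ((Finset.sum_eq_sum_iff_of_le (fun i _ => hone i)).mp hsum' i
          (Finset.mem_univ i)).symm
      have hsing : ∀ i, ∃ c, (((List.finRange r.length).map fun j => Z i j)).filter
          (fun x => x ≠ 0) = [c] :=
        fun i => List.length_eq_one_iff.mp (hlen1 i)
      choose c hc using hsing
      have hc_eq : ∀ i, c i = q.blocksFun i := by
        have hofn : List.ofFn c = List.ofFn q.blocksFun := by
          rw [Composition.ofFn_blocksFun, ← hw', List.flatMap_def,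
            List.map_congr_left (fun i _ => hc i), ← List.flatMap_def, flatMap_single,
            List.ofFn_eq_map]
        intro i
        exact congrFun (List.ofFn_inj.mp hofn) i
      have hcard : ∀ i, (Finset.univ.filter (fun j => Z i j ≠ 0)).card = 1 := by
        intro i
        rw [card_filter_eq_length (Z i)]
        exact hlen1 i
      have hrowsingle : ∀ i, ∃ j₀, Finset.univ.filter (fun j => Z i j ≠ 0) = {j₀} :=
        fun i => Finset.card_eq_one.mp (hcard i)
      choose σ' hσ' using hrowsingle
      have hZrow : ∀ i j, j ≠ σ' i → Z i j = 0 := by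
        intro i j hj
        by_contra hz
        have hmem : j ∈ Finset.univ.filter (fun j => Z i j ≠ 0) :=
          Finset.mem_filter.mpr ⟨Finset.mem_univ _, hz⟩
        rw [hσ' i] at hmem
        exact hj (Finset.mem_singleton.mp hmem)
      have hZval : ∀ i, Z i (σ' i) = q.blocksFun i := by
        intro i
        have h5 := hrow i
        rw [← Finset.sum_filter_ne_zero, hσ' i, Finset.sum_singleton] at h5
        exact h5
      have hZne : ∀ i, Z i (σ' i) ≠ 0 := fun i => by
        rw [hZval i]; exact Nat.one_le_iff_ne_zero.mp (q.one_le_blocksFun i)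
      -- column counts
      have hcolsum : ∑ j, (Finset.univ.filter (fun i => Z i j ≠ 0)).card = r.length := by
        calc ∑ j, (Finset.univ.filter (fun i => Z i j ≠ 0)).card
            = ∑ j, ∑ i, (if Z i j ≠ 0 then 1 else 0) := by
              refine Finset.sum_congr rfl fun j _ => ?_
              rw [Finset.card_filter]
          _ = ∑ i, ∑ j, (if Z i j ≠ 0 then 1 else 0) := Finset.sum_comm
          _ = ∑ i, (Finset.univ.filter (fun j => Z i j ≠ 0)).card := by
              refine Finset.sum_congr rfl fun i _ => ?_
              rw [Finset.card_filter]
          _ = ∑ _i : Fin q.length, 1 := Finset.sum_congr rfl fun i _ => hcard i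
          _ = q.length := by simp
          _ = r.length := hst
      have hcolpos : ∀ j, 1 ≤ (Finset.univ.filter (fun i => Z i j ≠ 0)).card := by
        intro j
        rw [Nat.one_le_iff_ne_zero, ← Nat.pos_iff_ne_zero, Finset.card_pos]
        by_contra hempty
        rw [Finset.not_nonempty_iff_eq_empty, Finset.filter_eq_empty_iff] at hempty
        have h6 := hcol j
        rw [Finset.sum_eq_zero (fun i _ => by
          have := hempty (Finset.mem_univ i); simpa using this)] at h6
        exact Nat.one_le_iff_ne_zero.mp (r.one_le_blocksFun j) h6.symm
      have hcol1 : ∀ j, (Finset.univ.filter (fun i => Z i j ≠ 0)).card = 1 := by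
        have hsum' : (∑ _j : Fin r.length, 1)
            = ∑ j, (Finset.univ.filter (fun i => Z i j ≠ 0)).card := by
          rw [hcolsum]; simp
        intro j
        exact ((Finset.sum_eq_sum_iff_of_le (fun j _ => hcolpos j)).mp hsum' j
          (Finset.mem_univ j)).symm
      have hinj' : Function.Injective σ' := by
        intro i i' hii
        obtain ⟨i₀, hi₀⟩ := Finset.card_eq_one.mp (hcol1 (σ' i))
        have h1 : i ∈ Finset.univ.filter (fun k => Z k (σ' i) ≠ 0) :=
          Finset.mem_filter.mpr ⟨Finset.mem_univ _, hZne i⟩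
        have h2 : i' ∈ Finset.univ.filter (fun k => Z k (σ' i) ≠ 0) :=
          Finset.mem_filter.mpr ⟨Finset.mem_univ _, by rw [hii]; exact hZne i'⟩
        rw [hi₀] at h1 h2
        exact (Finset.mem_singleton.mp h1).trans (Finset.mem_singleton.mp h2).symm
      have hbij : Function.Bijective σ' :=
        (Fintype.bijective_iff_injective_and_card σ').mpr ⟨hinj', by simp [hst]⟩
      have hσcond : ∀ i, r.blocksFun (σ' i) = q.blocksFun i := by
        intro i
        obtain ⟨i₀, hi₀⟩ := Finset.card_eq_one.mp (hcol1 (σ' i))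
        have hiin : i ∈ Finset.univ.filter (fun k => Z k (σ' i) ≠ 0) :=
          Finset.mem_filter.mpr ⟨Finset.mem_univ _, hZne i⟩
        rw [hi₀, Finset.mem_singleton] at hiin
        have h7 := hcol (σ' i)
        rw [← Finset.sum_filter_ne_zero, hi₀, Finset.sum_singleton, ← hiin, hZval i] at h7
        exact h7.symm
      refine ⟨⟨Equiv.ofBijective σ' hbij, hσcond⟩, Set.mem_univ _, ?_⟩
      funext i j
      show (if σ' i = j then q.blocksFun i else 0) = Z i j
      by_cases hj : σ' i = j
      · rw [if_pos hj, ← hj, hZval i]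
      · rw [if_neg hj]
        exact (hZrow i j (fun hh => hj hh.symm)).symm
    · rintro Z ⟨σ, -, rfl⟩
      refine ⟨⟨fun i => ?_, fun j => ?_⟩, ?_⟩
      · show (∑ j, if σ.1 i = j then q.blocksFun i else 0) = q.blocksFun i
        rw [Finset.sum_ite_eq]
        simp
      · show (∑ i, if σ.1 i = j then q.blocksFun i else 0) = r.blocksFun j
        rw [Finset.sum_congr rfl (fun i _ => show (if σ.1 i = j then q.blocksFun i else 0)
            = (if i = σ.1.symm j then q.blocksFun i else 0) by
          by_cases hij : σ.1 i = j
          · rw [if_pos hij, if_pos ((Equiv.apply_eq_iff_eq_symm_apply σ.1).mp hij)]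
          · rw [if_neg hij, if_neg (fun hh =>
              hij ((Equiv.apply_eq_iff_eq_symm_apply σ.1).mpr hh))]),
          Finset.sum_ite_eq']
        simp only [Finset.mem_univ, if_true]
        have := σ.2 (σ.1.symm j)
        rw [Equiv.apply_symm_apply] at this
        exact this.symm
      · show wList (Zmat q r σ.1) = q.blocks
        unfold wList
        rw [filter_flatMap']
        simp only [Zmat]
        rw [List.flatMap_def, List.map_congr_left (fun i _ =>
          row_filter (σ.1 i) (q.blocksFun i)
            (Nat.one_le_iff_ne_zero.mp (q.one_le_blocksFun i))), ← List.flatMap_def,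
          flatMap_single, ← List.ofFn_eq_map, Composition.ofFn_blocksFun]
  have hinj : Function.Injective (fun σ : {σ : Fin q.length ≃ Fin r.length //
      ∀ i, r.blocksFun (σ i) = q.blocksFun i} => Zmat q r σ.1) := by
    intro σ τ hZ
    apply Subtype.ext
    apply Equiv.ext
    intro i
    by_contra hne
    have h8 := congrFun (congrFun hZ i) (σ.1 i)
    simp only [Zmat] at h8
    rw [if_pos trivial, if_neg (fun hh => hne hh.symm)] at h8
    exact Nat.one_le_iff_ne_zero.mp (q.one_le_blocksFun i) h8
  rw [himg, Set.ncard_image_of_injective _ hinj, Set.ncard_univ]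
  exact card_bij q r h


end
end

section
/- Let λ and μ be partitions of n, regarded as weakly decreasing compositions, and let σ_μ ∈ S_n be an element of cycle type μ. If χ_λ(σ_μ) ≠ 0 then the parts of μ can be grouped so that the sums of the groups are exactly the parts of λ (in particular μ ≤ λ in lexicographic order). Moreover, if λ has t_i parts equal to i for each i, then χ_λ evaluated at an element of cycle type λ equals t_1!·t_2!·…·t_n!. -/
open scoped Classical

set_option synthInstance.maxHeartbeats 1000000
set_option maxHeartbeats 1000000

noncomputable section

/-!
A block of a `σ`-invariant ordered set partition is a union of orbits of `σ`, so `χ_λ(σ_μ)`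
counts the maps `f` from the parts of `μ` to the parts of `λ` whose fibres have sums equal to
the corresponding parts of `λ`. Given such an `f`, the largest part of `μ` is at most the
largest part of `λ`; if they are equal, its fibre is a single part and both can be removed,
so induction gives `μ ≤ λ` lexicographically. When `μ = λ`, all fibres are nonempty and there
are as many parts as boxes, so `f` is a permutation of the parts of `λ` preserving their sizes;
these form the stabiliser of `λ`, of order `∏ t_i!`.
-/

open Finset

namespace Equiv.Perm

variable {α : Type*} [Fintype α]

lemma mem_of_sameCycle {σ : Perm α} {s : Finset α} (hs : ∀ x ∈ s, σ x ∈ s) {x y : α}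
    (hxy : σ.SameCycle x y) (hx : x ∈ s) : y ∈ s := by
  obtain ⟨i, rfl⟩ := hxy.exists_nat_pow_eq
  clear hxy
  induction i with
  | zero => exact hx
  | succ i ih => rw [pow_succ', mul_apply]; exact hs _ ih

variable [DecidableEq α] (σ : Perm α)

/-- The orbits of `⟨σ⟩`: the cycles of `σ` together with its fixed points. -/
abbrev OrbitIndex : Type _ := σ.cycleFactorsFinset ⊕ {x // x ∉ σ.support}

def orbitSet : OrbitIndex σ → Finset α :=
  Sum.elim (fun c => c.1.support) (fun x => {x.1})

variable {σ}

lemma orbitSet_nonempty (o : OrbitIndex σ) : (orbitSet σ o).Nonempty := by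
  rcases o with c | x
  · exact (mem_cycleFactorsFinset_iff.mp c.2).1.nonempty_support
  · exact singleton_nonempty _

lemma exists_mem_orbitSet (x : α) : ∃ o, x ∈ orbitSet σ o := by
  by_cases hx : x ∈ σ.support
  · refine ⟨.inl ⟨σ.cycleOf x, cycleOf_mem_cycleFactorsFinset_iff.mpr hx⟩, ?_⟩
    exact mem_support_cycleOf_iff.mpr ⟨.refl _ _, hx⟩
  · exact ⟨.inr ⟨x, hx⟩, mem_singleton_self _⟩

lemma apply_mem_orbitSet {o : OrbitIndex σ} {x : α} (hx : x ∈ orbitSet σ o) :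
    σ x ∈ orbitSet σ o := by
  rcases o with c | y
  · exact (mem_cycleFactorsFinset_support c.2 x).mpr hx
  · obtain rfl : x = y := mem_singleton.mp hx
    rw [notMem_support.mp y.2]
    exact hx

lemma sameCycle_of_mem_orbitSet {o : OrbitIndex σ} {x y : α} (hx : x ∈ orbitSet σ o)
    (hy : y ∈ orbitSet σ o) : σ.SameCycle x y := by
  rcases o with c | z
  · change x ∈ c.1.support at hx
    change y ∈ c.1.support at hy
    rw [cycle_is_cycleOf hx c.2] at hy
    exact (mem_support_cycleOf_iff.mp hy).1
  · rw [(mem_singleton.mp hx).trans (mem_singleton.mp hy).symm]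

lemma eq_of_mem_orbitSet {o o' : OrbitIndex σ} {x : α} (h : x ∈ orbitSet σ o)
    (h' : x ∈ orbitSet σ o') : o = o' := by
  rcases o with c | y <;> rcases o' with c' | y'
  · have hc : c.1 = c'.1 := by
      rw [cycle_is_cycleOf h c.2, cycle_is_cycleOf h' c'.2]
    rw [Subtype.ext hc]
  · exact absurd (mem_cycleFactorsFinset_support_le c.2 h) (mem_singleton.mp h' ▸ y'.2)
  · exact absurd (mem_cycleFactorsFinset_support_le c'.2 h') (mem_singleton.mp h ▸ y.2)
  · rw [Subtype.ext ((mem_singleton.mp h).symm.trans (mem_singleton.mp h'))]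

lemma orbitSet_disjoint {o o' : OrbitIndex σ} (h : o ≠ o') :
    _root_.Disjoint (orbitSet σ o) (orbitSet σ o') :=
  disjoint_left.mpr fun _ hx hx' => h (eq_of_mem_orbitSet hx hx')

lemma map_card_orbitSet : univ.val.map (fun o => #(orbitSet σ o)) = σ.partition.parts := by
  rw [← univ_disjSum_univ, val_disjSum, Multiset.disjSum, Multiset.map_add, Multiset.map_map,
    Multiset.map_map, parts_partition, cycleType_def]
  congr 1
  · rw [univ_eq_attach, attach_val]
    exact Multiset.attach_map_val' _ (card ∘ support)
  · have hfix : Fintype.card {x // x ∉ σ.support} = Fintype.card α - #σ.support := by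
      rw [Fintype.card_subtype_compl, Fintype.card_coe]
    rw [← hfix, Multiset.eq_replicate]
    refine ⟨by simp, ?_⟩
    simp [orbitSet]

variable {ι : Type*} [DecidableEq ι]

variable (σ) in
def orbitUnion (F : OrbitIndex σ → ι) (j : ι) : Finset α :=
  (univ.filter (F · = j)).biUnion (orbitSet σ)

lemma mem_orbitUnion {F : OrbitIndex σ → ι} {j : ι} {x : α} :
    x ∈ orbitUnion σ F j ↔ ∃ o, F o = j ∧ x ∈ orbitSet σ o := by
  simp only [orbitUnion, mem_biUnion, mem_filter, mem_univ, true_and]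

lemma card_orbitUnion (F : OrbitIndex σ → ι) (j : ι) :
    #(orbitUnion σ F j) = ∑ o with F o = j, #(orbitSet σ o) :=
  card_biUnion fun _ _ _ _ h => orbitSet_disjoint h

lemma orbitUnion_disjoint (F : OrbitIndex σ → ι) {j j' : ι} (h : j ≠ j') :
    _root_.Disjoint (orbitUnion σ F j) (orbitUnion σ F j') := by
  refine disjoint_left.mpr fun x hx hx' => ?_
  obtain ⟨o, rfl, hxo⟩ := mem_orbitUnion.mp hx
  obtain ⟨o', rfl, hxo'⟩ := mem_orbitUnion.mp hx'
  exact h (congrArg F (eq_of_mem_orbitSet hxo hxo'))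

lemma mem_orbitUnion_self (F : OrbitIndex σ → ι) {o : OrbitIndex σ} {x : α}
    (hx : x ∈ orbitSet σ o) : x ∈ orbitUnion σ F (F o) :=
  mem_orbitUnion.mpr ⟨o, rfl, hx⟩

lemma apply_mem_orbitUnion {F : OrbitIndex σ → ι} {j : ι} {x : α}
    (hx : x ∈ orbitUnion σ F j) : σ x ∈ orbitUnion σ F j := by
  obtain ⟨o, rfl, hxo⟩ := mem_orbitUnion.mp hx
  exact mem_orbitUnion_self F (apply_mem_orbitSet hxo)

lemma orbitUnion_injective : Function.Injective (orbitUnion σ (ι := ι)) := by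
  intro F G hFG
  funext o
  obtain ⟨x, hx⟩ := orbitSet_nonempty o
  have hxG : x ∈ orbitUnion σ G (F o) := hFG ▸ mem_orbitUnion_self F hx
  obtain ⟨o', hGo', hxo'⟩ := mem_orbitUnion.mp hxG
  rw [← hGo', eq_of_mem_orbitSet hx hxo']

lemma exists_orbitUnion_eq {P : ι → Finset α}
    (hdisj : ∀ i j, i ≠ j → _root_.Disjoint (P i) (P j)) (hcov : ∀ x, ∃ i, x ∈ P i)
    (hinv : ∀ i, ∀ x ∈ P i, σ x ∈ P i) :
    ∃ F : OrbitIndex σ → ι, orbitUnion σ F = P := by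
  choose pt hpt using fun o : OrbitIndex σ => orbitSet_nonempty o
  choose F hF using fun o => hcov (pt o)
  have hsub : ∀ o, orbitSet σ o ⊆ P (F o) := fun o x hx =>
    mem_of_sameCycle (hinv _) (sameCycle_of_mem_orbitSet (hpt o) hx) (hF o)
  refine ⟨F, funext fun j => Finset.ext fun x => ⟨fun hx => ?_, fun hx => ?_⟩⟩
  · obtain ⟨o, rfl, hxo⟩ := mem_orbitUnion.mp hx
    exact hsub o hxo
  · obtain ⟨o, hxo⟩ := exists_mem_orbitSet (σ := σ) x
    refine mem_orbitUnion.mpr ⟨o, ?_, hxo⟩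
    by_contra hne
    exact disjoint_left.mp (hdisj _ _ hne) (hsub o hxo) hx

end Equiv.Perm

open Equiv.Perm

lemma youngChar_eq_card_orbit_distributions {n : ℕ} (q : Composition n)
    (σ : Equiv.Perm (Fin n)) :
    youngChar q σ =
      #{F : OrbitIndex σ → Fin q.length |
        ∀ j, ∑ o with F o = j, #(orbitSet σ o) = q.blocksFun j} := by
  rw [youngChar]
  symm
  apply card_nbij (orbitUnion σ)
  · intro F hF
    simp only [coe_filter, mem_univ, true_and, Set.mem_ofPred_eq] at hF ⊢
    refine ⟨fun j => (card_orbitUnion F j).trans (hF j), fun i j => orbitUnion_disjoint F,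
      fun x => ?_, fun i x => apply_mem_orbitUnion⟩
    obtain ⟨o, ho⟩ := exists_mem_orbitSet (σ := σ) x
    exact ⟨F o, mem_orbitUnion_self F ho⟩
  · exact orbitUnion_injective.injOn
  · intro P hP
    simp only [coe_filter, mem_univ, true_and, Set.mem_ofPred_eq] at hP ⊢
    obtain ⟨hcard, hdisj, hcov, hinv⟩ := hP
    obtain ⟨F, rfl⟩ := exists_orbitUnion_eq hdisj hcov hinv
    exact ⟨F, fun j => (card_orbitUnion F j).symm.trans (hcard j), rfl⟩

lemma Fintype.exists_equiv_comp_eq_of_map_univ_eq {ι κ β : Type*} [Fintype ι] [Fintype κ]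
    [DecidableEq β] {f : ι → β} {g : κ → β} (h : univ.val.map f = univ.val.map g) :
    ∃ e : ι ≃ κ, ∀ i, g (e i) = f i := by
  have hfib : ∀ b, Fintype.card {i // f i = b} = Fintype.card {k // g k = b} := fun b => by
    have := congrArg (Multiset.count b) h
    simp only [Multiset.count_map, Fintype.card_subtype, eq_comm] at this ⊢
    exact this
  exact ⟨(Equiv.sigmaFiberEquiv f).symm.trans ((Equiv.sigmaCongrRight fun b =>
      Fintype.equivOfCardEq (hfib b)).trans (Equiv.sigmaFiberEquiv g)),
    fun i => (Fintype.equivOfCardEq (hfib (f i)) ⟨i, rfl⟩).2⟩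

lemma Composition.map_univ_blocksFun {n : ℕ} (q : Composition n) :
    univ.val.map q.blocksFun = q.blocks := by
  rw [Fin.univ_val_map, q.ofFn_blocksFun]

lemma Composition.card_blocksFun_eq {n : ℕ} (q : Composition n) (v : ℕ) :
    Fintype.card {i // q.blocksFun i = v} = q.blocks.count v := by
  rw [← Multiset.coe_count, ← q.map_univ_blocksFun, Multiset.count_map, Fintype.card_subtype]
  simp only [eq_comm]
  rfl

lemma Equiv.Perm.exists_equiv_orbitIndex {n : ℕ} {q : Composition n} {σ : Equiv.Perm (Fin n)}
    (hσ : σ.partition.parts = q.blocks) :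
    ∃ e : Fin q.length ≃ OrbitIndex σ, ∀ i, #(orbitSet σ (e i)) = q.blocksFun i :=
  Fintype.exists_equiv_comp_eq_of_map_univ_eq (g := fun o => #(orbitSet σ o)) <| by
    rw [q.map_univ_blocksFun, map_card_orbitSet, hσ]

theorem youngChar_eq_card_fiber_sums {n : ℕ} (lam mu : Composition n) {σ : Equiv.Perm (Fin n)}
    (hσ : σ.partition.parts = mu.blocks) :
    youngChar lam σ =
      #{f : Fin mu.length → Fin lam.length |
        ∀ j, ∑ i with f i = j, mu.blocksFun i = lam.blocksFun j} := by
  obtain ⟨e, he⟩ := exists_equiv_orbitIndex hσ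
  have hsum (F : OrbitIndex σ → Fin lam.length) (j : Fin lam.length) :
      ∑ i with F (e i) = j, mu.blocksFun i = ∑ o with F o = j, #(orbitSet σ o) := by
    simp only [sum_filter, ← he]
    exact e.sum_comp fun o => if F o = j then #(orbitSet σ o) else 0
  rw [youngChar_eq_card_orbit_distributions]
  refine card_nbij' (· ∘ e) (· ∘ e.symm) (fun F hF => ?_) (fun f hf => ?_)
    (fun F _ => by simp [Function.comp_def]) (fun f _ => by simp [Function.comp_def])
  · simp only [coe_filter, mem_univ, true_and, Set.mem_ofPred_eq, Function.comp_apply] at hF ⊢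
    exact fun j => (hsum F j).trans (hF j)
  · simp only [coe_filter, mem_univ, true_and, Set.mem_ofPred_eq] at hf ⊢
    intro j
    rw [← hsum]
    simpa using hf j

theorem Fintype.card_filter_fiber_sums_eq {ι : Type*} [Fintype ι] [DecidableEq ι]
    (a : ι → ℕ) (ha : ∀ i, 0 < a i) :
    #{f : ι → ι | ∀ j, ∑ i with f i = j, a i = a j} =
      Fintype.card {g : Equiv.Perm ι // a ∘ g = a} := by
  have fiber_sum (f : ι → ι) (hf : f.Injective) (i : ι) :
      ∑ i' with f i' = f i, a i' = a i := by
    rw [sum_filter, Finset.sum_eq_single i (fun i' _ hi' => if_neg (hf.ne hi')) (by simp)]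
    exact if_pos rfl
  rw [Fintype.card_subtype]
  symm
  apply card_nbij (fun g : Equiv.Perm ι => (g : ι → ι))
  · intro g hg
    simp only [coe_filter, mem_univ, true_and, Set.mem_ofPred_eq] at hg ⊢
    intro j
    rw [← g.apply_symm_apply j, fiber_sum g g.injective, ← congrFun hg (g.symm j)]
    simp
  · exact Equiv.coe_fn_injective.injOn
  · intro f hf
    simp only [coe_filter, mem_univ, true_and, Set.mem_ofPred_eq] at hf
    have hsurj : f.Surjective := fun j => by
      obtain ⟨i, hi, -⟩ := exists_ne_zero_of_sum_ne_zero ((hf j).trans_ne (ha j).ne')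
      exact ⟨i, (mem_filter.mp hi).2⟩
    have hbij : f.Bijective := Finite.surjective_iff_bijective.mp hsurj
    refine ⟨Equiv.ofBijective f hbij, ?_, rfl⟩
    simp only [coe_filter, mem_univ, true_and, Set.mem_ofPred_eq]
    funext i
    exact (hf (f i)).symm.trans (fiber_sum f hbij.1 i)

lemma Composition.card_stabilizer_blocksFun {n : ℕ} (q : Composition n) :
    Fintype.card {g : Equiv.Perm (Fin q.length) // q.blocksFun ∘ g = q.blocksFun} =
      ∏ v ∈ Icc 1 n, (q.blocks.count v).factorial := by
  rw [DomMulAct.stabilizer_card']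
  simp_rw [q.card_blocksFun_eq]
  refine prod_subset (fun v hv => ?_) (fun v _ hv => ?_)
  · obtain ⟨i, -, rfl⟩ := mem_image.mp hv
    exact mem_Icc.mpr ⟨q.one_le_blocksFun i, q.blocksFun_le i⟩
  · rw [← q.card_blocksFun_eq, Fintype.card_eq_zero_iff.mpr, Nat.factorial_zero]
    exact ⟨fun ⟨i, hi⟩ => hv (mem_image.mpr ⟨i, mem_univ _, hi⟩)⟩

lemma Multiset.eq_singleton_of_sum_le {g : Multiset ℕ} (hpos : ∀ x ∈ g, 0 < x) {m : ℕ}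
    (hm : m ∈ g) (hsum : g.sum ≤ m) : g = {m} := by
  rw [← cons_erase hm, sum_cons] at hsum
  rw [← cons_erase hm]
  have hzero : ∀ x ∈ g.erase m, x = 0 := sum_eq_zero_iff.mp (by omega)
  rw [eq_zero_of_forall_notMem fun x hx => (hpos x (mem_of_mem_erase hx)).ne' (hzero x hx)]
  rfl

lemma Multiset.exists_join_eq_of_fiber_sums {ι κ : Type*} [Fintype ι] [Fintype κ]
    [DecidableEq κ] (f : ι → κ) (w : ι → ℕ) (a : κ → ℕ)
    (h : ∀ j, ∑ i with f i = j, w i = a j) :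
    ∃ C : Multiset (Multiset ℕ), C.join = univ.val.map w ∧ C.map sum = univ.val.map a := by
  refine ⟨univ.val.map fun j => (univ.filter (f · = j)).val.map w, ?_, ?_⟩
  · have h (s : Finset ι) : s.val.map w = ∑ i ∈ s, ({w i} : Multiset ℕ) := by
      rw [Finset.sum_eq_multiset_sum, ← sum_map_singleton (s.val.map w), map_map]
      rfl
    simp only [h]
    exact Finset.sum_fiberwise univ f _
  · rw [map_map]
    exact map_congr rfl fun j _ => h j

theorem List.eq_or_lex_lt_of_refinement {M L : List ℕ} (hM : ∀ x ∈ M, 0 < x)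
    (hL : ∀ x ∈ L, 0 < x) (hMs : M.Pairwise (· ≥ ·)) (hLs : L.Pairwise (· ≥ ·))
    {C : Multiset (Multiset ℕ)} (hjoin : C.join = M) (hsum : C.map Multiset.sum = L) :
    M = L ∨ List.Lex (· < ·) M L := by
  induction M generalizing L C with
  | nil =>
    obtain _ | ⟨a, L⟩ := L
    · exact .inl rfl
    obtain ⟨g, hgC, rfl⟩ := Multiset.mem_map.mp (hsum ▸ Multiset.mem_coe.mpr mem_cons_self)
    have hg : g = 0 := Multiset.eq_zero_of_forall_notMem fun x hx => by
      have := Multiset.mem_join.mpr ⟨g, hgC, hx⟩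
      simp [hjoin] at this
    exact absurd (hL _ mem_cons_self) (by simp [hg])
  | cons m M ih =>
    obtain ⟨g, hgC, hmg⟩ := Multiset.mem_join.mp (hjoin ▸ Multiset.mem_coe.mpr mem_cons_self)
    have hgL : g.sum ∈ (L : Multiset ℕ) := hsum ▸ Multiset.mem_map_of_mem _ hgC
    obtain _ | ⟨a, L⟩ := L
    · simp at hgL
    have hga : g.sum ≤ a := by
      rcases mem_cons.mp (Multiset.mem_coe.mp hgL) with h | h
      · exact h.le
      · exact rel_of_pairwise_cons hLs h
    rcases ((Multiset.le_sum_of_mem hmg).trans hga).lt_or_eq with hlt | rfl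
    · exact .inr (.rel hlt)
    have hgpos (x : ℕ) (hx : x ∈ g) : 0 < x :=
      hM x (Multiset.mem_coe.mp (hjoin ▸ Multiset.mem_join.mpr ⟨g, hgC, hx⟩))
    have hg : g = {m} := Multiset.eq_singleton_of_sum_le hgpos hmg hga
    subst hg
    obtain ⟨C, rfl⟩ := Multiset.exists_cons_of_mem hgC
    rw [Multiset.join_cons, Multiset.singleton_add, ← Multiset.cons_coe,
      Multiset.cons_inj_right] at hjoin
    rw [Multiset.map_cons, Multiset.sum_singleton, ← Multiset.cons_coe,
      Multiset.cons_inj_right] at hsum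
    rcases ih (fun x hx => hM x (mem_cons_of_mem _ hx)) (fun x hx => hL x (mem_cons_of_mem _ hx))
      hMs.of_cons hLs.of_cons hjoin hsum with h | h
    · exact .inl (h ▸ rfl)
    · exact .inr (.cons h)

/-- Let `λ` and `μ` be partitions of `n` (weakly decreasing compositions) and
let `σ_μ` have cycle type `μ`.  If `χ_λ(σ_μ) ≠ 0` then the parts of `μ` can be grouped so that
the sums of the groups are exactly the parts of `λ` (in particular `μ ≤ λ` lexicographically);
moreover `χ_λ` evaluated at an element of cycle type `λ` equals `t_1!·t_2!·…·t_n!` where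
`λ` has `t_i` parts equal to `i`. -/
theorem stmt4 (n : ℕ) (lam mu : Composition n)
    (hlam : lam.blocks.Pairwise (· ≥ ·)) (hmu : mu.blocks.Pairwise (· ≥ ·))
    (σ : Equiv.Perm (Fin n)) (hσ : σ.partition.parts = (mu.blocks : Multiset ℕ)) :
    (youngChar lam σ ≠ 0 →
      (∃ f : Fin mu.length → Fin lam.length,
        ∀ j, ∑ i ∈ Finset.univ.filter (fun i => f i = j), mu.blocksFun i = lam.blocksFun j) ∧
      (mu.blocks = lam.blocks ∨ List.Lex (· < ·) mu.blocks lam.blocks)) ∧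
    (∀ τ : Equiv.Perm (Fin n), τ.partition.parts = (lam.blocks : Multiset ℕ) →
      youngChar lam τ = ∏ i ∈ Finset.Icc 1 n, Nat.factorial (lam.blocks.count i)) := by
  refine ⟨fun hχ => ?_, fun τ hτ => ?_⟩
  · rw [youngChar_eq_card_fiber_sums lam mu hσ] at hχ
    obtain ⟨f, hf⟩ := card_ne_zero.mp hχ
    replace hf := (mem_filter.mp hf).2
    obtain ⟨C, hjoin, hsum⟩ := Multiset.exists_join_eq_of_fiber_sums f _ _ hf
    rw [Composition.map_univ_blocksFun] at hjoin hsum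
    exact ⟨⟨f, hf⟩, List.eq_or_lex_lt_of_refinement (fun _ => mu.blocks_pos)
      (fun _ => lam.blocks_pos) hmu hlam hjoin hsum⟩
  · rw [youngChar_eq_card_fiber_sums lam lam hτ, ← lam.card_stabilizer_blocksFun]
    convert Fintype.card_filter_fiber_sums_eq _ lam.one_le_blocksFun
end
end
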